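/- Suppose the vectors C₀, C₁, …, C_k in W satisfy b(C₀,J₀) = 1, b(C₀,Jᵢ) = 0, b(Cᵢ,J₀) = 0 and b(Cᵢ,Jⱼ) = δᵢⱼ for all i,j ∈ {1,…,k}, let V > 0, and define g_t(x,y) = b(J(t),x)·b(J(t),y)/V − b(x,y). Then as t → ∞: (i) g_t(C₀,C₀) → ∞; (ii) the kinetic mixing ratio g_t(C₀,Cᵢ)/g_t(C₀,C₀) → 0 for each i; and (iii) g_t(Cᵢ,Cⱼ) → −b(Cᵢ,Cⱼ), i.e. the remaining kinetic couplings stay finite. Hence the 2-form B⁰ coupled to C⁰ is the unique asymptotically weakly coupled tensor field in this basis. -/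

import Mathlib

/-!
By the duality relations, `b(J(t), C₀) = t` and `b(J(t), Cᵢ) = aᵢ/(2t)`. Hence
`g_t(C₀,C₀) = t²/V − b(C₀,C₀)` grows quadratically, `g_t(C₀,Cᵢ) = aᵢ/(2V) − b(C₀,Cᵢ)` is
constant for `t > 0`, and `g_t(Cᵢ,Cⱼ) = aᵢaⱼ/(4Vt²) − b(Cᵢ,Cⱼ)`.
-/

open Finset Filter Topology

section DualPairing

variable {W : Type*} [AddCommGroup W] [Module ℝ W] (b : W →ₗ[ℝ] W →ₗ[ℝ] ℝ)
  {ι : Type*} [Fintype ι] {J₀ : W} {J : ι → W}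

theorem apply_smul_add_sum_smul_eq_coeff_zero {C₀ : W} (h00 : b C₀ J₀ = 1)
    (h0i : ∀ i, b C₀ (J i) = 0) (t : ℝ) (c : ι → ℝ) :
    b C₀ (t • J₀ + ∑ i, c i • J i) = t := by
  simp [h00, h0i]

theorem apply_smul_add_sum_smul_eq_coeff [DecidableEq ι] {C : ι → W}
    (hi0 : ∀ i, b (C i) J₀ = 0) (hij : ∀ i j, b (C i) (J j) = if i = j then (1 : ℝ) else 0)
    (t : ℝ) (c : ι → ℝ) (i : ι) :
    b (C i) (t • J₀ + ∑ j, c j • J j) = c i := by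
  simp [hi0, hij]

end DualPairing

theorem tendsto_mul_self_div_sub_atTop {V : ℝ} (hV : 0 < V) (c : ℝ) :
    Tendsto (fun t : ℝ => t * t / V - c) atTop atTop :=
  tendsto_atTop_add_const_right _ _ ((tendsto_id.atTop_mul_atTop₀ tendsto_id).atTop_div_const hV)

theorem tendsto_const_div_two_mul_atTop_zero (a : ℝ) :
    Tendsto (fun t : ℝ => a / (2 * t)) atTop (𝓝 0) :=
  (tendsto_id.const_mul_atTop two_pos).const_div_atTop a

theorem tendsto_mul_const_div_two_mul (a : ℝ) :
    Tendsto (fun t : ℝ => t * (a / (2 * t))) atTop (𝓝 (a / 2)) := by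
  refine tendsto_const_nhds.congr' ?_
  filter_upwards [eventually_ne_atTop 0] with t ht
  field_simp

theorem unique_weakly_coupled_tensor_general
    (W : Type*) [AddCommGroup W] [Module ℝ W]
    (b : W →ₗ[ℝ] W →ₗ[ℝ] ℝ) (hsymm : ∀ x y, b x y = b y x)
    (k : ℕ) (J₀ : W) (J : Fin k → W) (a : Fin k → ℝ) (V : ℝ) (hV : 0 < V)
    (C₀ : W) (C : Fin k → W)
    (h00 : b C₀ J₀ = 1) (h0i : ∀ i, b C₀ (J i) = 0)
    (hi0 : ∀ i, b (C i) J₀ = 0)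
    (hij : ∀ i j, b (C i) (J j) = if i = j then (1:ℝ) else 0)
    (Jt : ℝ → W) (hJt : ∀ t : ℝ, Jt t = t • J₀ + ∑ i, (a i / (2*t)) • J i)
    (g : ℝ → W → W → ℝ)
    (hg : ∀ t x y, g t x y = b (Jt t) x * b (Jt t) y / V - b x y) :
    Tendsto (fun t : ℝ => g t C₀ C₀) atTop atTop ∧
    (∀ i, Tendsto (fun t : ℝ => g t C₀ (C i) / g t C₀ C₀) atTop (nhds 0)) ∧
    (∀ i j, Tendsto (fun t : ℝ => g t (C i) (C j)) atTop
      (nhds (-(b (C i) (C j))))) := by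
  have hJC₀ : ∀ t, b (Jt t) C₀ = t := fun t => by
    rw [hsymm, hJt, apply_smul_add_sum_smul_eq_coeff_zero b h00 h0i]
  have hJC : ∀ t i, b (Jt t) (C i) = a i / (2 * t) := fun t i => by
    rw [hsymm, hJt, apply_smul_add_sum_smul_eq_coeff b hi0 hij]
  have hdiag : Tendsto (fun t => g t C₀ C₀) atTop atTop := by
    simpa only [hg, hJC₀] using tendsto_mul_self_div_sub_atTop hV (b C₀ C₀)
  refine ⟨hdiag, fun i => ?_, fun i j => ?_⟩
  · have hmix : Tendsto (fun t => g t C₀ (C i)) atTop (𝓝 (a i / 2 / V - b C₀ (C i))) := by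
      simpa only [hg, hJC₀, hJC] using
        ((tendsto_mul_const_div_two_mul (a i)).div_const V).sub_const (b C₀ (C i))
    exact hmix.div_atTop hdiag
  · simpa only [hg, hJC, mul_zero, zero_div, zero_sub] using
      (((tendsto_const_div_two_mul_atTop_zero (a i)).mul
        (tendsto_const_div_two_mul_atTop_zero (a j))).div_const V).sub_const (b (C i) (C j))

/-- In the limit `t → ∞` of the kinetic pairing
`g_t(x,y) = b(J(t),x)·b(J(t),y)/V − b(x,y)` with `J(t) = t·J₀ + Σᵢ (aᵢ/(2t))·Jᵢ`
and `{C₀, Cᵢ}` dual to `{J₀, Jᵢ}`: (i) `g_t(C₀,C₀) → ∞`;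
(ii) the mixing ratios `g_t(C₀,Cᵢ)/g_t(C₀,C₀) → 0`; and
(iii) `g_t(Cᵢ,Cⱼ) → −b(Cᵢ,Cⱼ)` stays finite. Hence `B⁰` is the unique
asymptotically weakly coupled tensor in this basis. -/
theorem unique_weakly_coupled_tensor
    (W : Type*) [AddCommGroup W] [Module ℝ W] [FiniteDimensional ℝ W]
    (b : W →ₗ[ℝ] W →ₗ[ℝ] ℝ) (hsymm : ∀ x y, b x y = b y x)
    (k : ℕ) (J₀ : W) (J : Fin k → W) (a : Fin k → ℝ) (V : ℝ) (hV : 0 < V)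
    (C₀ : W) (C : Fin k → W)
    (h00 : b C₀ J₀ = 1) (h0i : ∀ i, b C₀ (J i) = 0)
    (hi0 : ∀ i, b (C i) J₀ = 0)
    (hij : ∀ i j, b (C i) (J j) = if i = j then (1:ℝ) else 0)
    (Jt : ℝ → W) (hJt : ∀ t : ℝ, Jt t = t • J₀ + ∑ i, (a i / (2*t)) • J i)
    (g : ℝ → W → W → ℝ)
    (hg : ∀ t x y, g t x y = b (Jt t) x * b (Jt t) y / V - b x y) :
    Tendsto (fun t : ℝ => g t C₀ C₀) atTop atTop ∧
    (∀ i, Tendsto (fun t : ℝ => g t C₀ (C i) / g t C₀ C₀) atTop (nhds 0)) ∧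
    (∀ i j, Tendsto (fun t : ℝ => g t (C i) (C j)) atTop
      (nhds (-(b (C i) (C j))))) :=
  unique_weakly_coupled_tensor_general W b hsymm k J₀ J a V hV C₀ C h00 h0i hi0 hij Jt hJt g hg
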